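/- arXiv:1512.02612 — 3 statements merged into one kernel-verified Lean document; each statement's English description precedes it below -/
import Mathlib

section
/- Let X be a metric space and f : X → X a topologically transitive homeomorphism. Then for every continuous function τ : X → (0,∞), the suspension flow φ^τ on the suspension X̂ is topologically transitive: there exists a point p ∈ X̂ whose flow orbit {φ^τ_t(p) : t ∈ ℝ} is dense in X̂. In fact, if x ∈ X has dense f-orbit, then q(x,0) has dense φ^τ-orbit. -/
/-- The relation generating the suspension equivalence: `(x, s + τ(x)) ∼ (f(x), s)`.
The suspension `X̂` is `Quot (susRel f τ)` with the quotient topology, and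
`Quot.mk (susRel f τ)` is the quotient map `q : X × ℝ → X̂`. -/
def susRel {X : Type*} (f : X → X) (τ : X → ℝ) : X × ℝ → X × ℝ → Prop :=
  fun p q => ∃ y s, p = (y, s + τ y) ∧ q = (f y, s)

/-- The suspension flow `φ^τ_t` on the suspension `X̂ = Quot (susRel f τ)`, induced by
the flow `(x, s) ↦ (x, s + t)` on `X × ℝ`. -/
def susFlow {X : Type*} (f : X → X) (τ : X → ℝ) (t : ℝ) :
    Quot (susRel f τ) → Quot (susRel f τ) :=
  Quot.lift (fun p => Quot.mk (susRel f τ) (p.1, p.2 + t)) (by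
    rintro ⟨a, b⟩ ⟨c, d⟩ ⟨y, s, h₁, h₂⟩
    rw [h₁, h₂]
    exact Quot.sound ⟨y, s + t, by rw [Prod.mk.injEq]; exact ⟨rfl, by ring⟩, rfl⟩)

/-! The quotient map `q` is continuous and surjective, so it sends the dense set
`{fⁿ x} × ℝ` to a dense subset of the suspension. That subset is the flow orbit of `q(x, 0)`:
the identification `q(y, s + τ y) = q(f y, s)` shifts time along the whole line `{y} × ℝ`,
so a line lies in a given set iff its image under `f` does. -/

open Set

section Suspension

variable {X : Type*} (f : X → X) (τ : X → ℝ)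

theorem susFlow_mk (t : ℝ) (x : X) (s : ℝ) :
    susFlow f τ t (Quot.mk (susRel f τ) (x, s)) = Quot.mk (susRel f τ) (x, s + t) :=
  rfl

theorem susRel_mk_add_eq (y : X) (s : ℝ) :
    Quot.mk (susRel f τ) (y, s + τ y) = Quot.mk (susRel f τ) (f y, s) :=
  Quot.sound ⟨y, s, rfl, rfl⟩

theorem forall_mk_apply_mem_iff (R : Set (Quot (susRel f τ))) (y : X) :
    (∀ s, Quot.mk (susRel f τ) (f y, s) ∈ R) ↔ ∀ s, Quot.mk (susRel f τ) (y, s) ∈ R := by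
  constructor
  · intro h s
    rw [← sub_add_cancel s (τ y), susRel_mk_add_eq]
    exact h _
  · intro h s
    rw [← susRel_mk_add_eq]
    exact h _

end Suspension

section Perm

variable {X : Type*} (e : Equiv.Perm X) (τ : X → ℝ)

theorem forall_mk_zpow_apply_mem {R : Set (Quot (susRel e τ))} {y : X}
    (hy : ∀ s, Quot.mk (susRel e τ) (y, s) ∈ R) (n : ℤ) (s : ℝ) :
    Quot.mk (susRel e τ) ((e ^ n) y, s) ∈ R := by
  induction n using Int.induction_on generalizing y with
  | zero => exact hy s
  | succ n ih =>
    rw [zpow_add_one, Equiv.Perm.mul_apply]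
    exact ih ((forall_mk_apply_mem_iff e τ R y).2 hy)
  | pred n ih =>
    rw [zpow_sub_one, Equiv.Perm.mul_apply]
    refine ih ((forall_mk_apply_mem_iff e τ R _).1 ?_)
    simpa using hy

theorem dense_range_susFlow_of_dense_zpow_orbit [TopologicalSpace X] {x : X}
    (hx : Dense (range fun n : ℤ => (e ^ n) x)) :
    Dense (range fun t : ℝ => susFlow e τ t (Quot.mk (susRel e τ) (x, 0))) := by
  have h_image : Dense (Quot.mk (susRel e τ) '' ((range fun n : ℤ => (e ^ n) x) ×ˢ univ)) :=
    Quot.mk_surjective.denseRange.dense_image continuous_quot_mk (hx.prod dense_univ)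
  refine h_image.mono ?_
  rintro _ ⟨⟨_, s⟩, ⟨⟨n, rfl⟩, -⟩, rfl⟩
  refine forall_mk_zpow_apply_mem e τ (R := range _) (fun s => ⟨s, ?_⟩) n s
  rw [susFlow_mk, zero_add]

end Perm

theorem suspension_flow_topologically_transitive_general {X : Type*} [MetricSpace X]
    (f : X ≃ₜ X)
    (hf_trans : ∃ x₀ : X, Dense (Set.range fun n : ℤ => (f.toEquiv ^ n) x₀))
    (τ : X → ℝ) :
    (∃ p : Quot (susRel (⇑f) τ),
      Dense (Set.range fun t : ℝ => susFlow (⇑f) τ t p)) ∧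
    (∀ x : X, Dense (Set.range fun n : ℤ => (f.toEquiv ^ n) x) →
      Dense (Set.range fun t : ℝ =>
        susFlow (⇑f) τ t (Quot.mk (susRel (⇑f) τ) (x, 0)))) := by
  obtain ⟨x₀, hx₀⟩ := hf_trans
  exact ⟨⟨_, dense_range_susFlow_of_dense_zpow_orbit f.toEquiv τ hx₀⟩,
    fun _ => dense_range_susFlow_of_dense_zpow_orbit f.toEquiv τ⟩

/-- Let `X` be a metric space and `f : X → X` a topologically transitive homeomorphism
(there is a point whose orbit `{fⁿ x : n ∈ ℤ}` is dense). Then for every continuous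
`τ : X → (0, ∞)`, the suspension flow `φ^τ` on the suspension `X̂` is topologically
transitive: there exists `p ∈ X̂` whose flow orbit `{φ^τ_t(p) : t ∈ ℝ}` is dense in `X̂`.
In fact, if `x ∈ X` has dense `f`-orbit, then `q(x, 0)` has dense `φ^τ`-orbit. -/
theorem suspension_flow_topologically_transitive {X : Type*} [MetricSpace X]
    (f : X ≃ₜ X)
    (hf_trans : ∃ x₀ : X, Dense (Set.range fun n : ℤ => (f.toEquiv ^ n) x₀))
    (τ : X → ℝ) (hτ_cont : Continuous τ) (hτ_pos : ∀ x, 0 < τ x) :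
    (∃ p : Quot (susRel (⇑f) τ),
      Dense (Set.range fun t : ℝ => susFlow (⇑f) τ t p)) ∧
    (∀ x : X, Dense (Set.range fun n : ℤ => (f.toEquiv ^ n) x) →
      Dense (Set.range fun t : ℝ =>
        susFlow (⇑f) τ t (Quot.mk (susRel (⇑f) τ) (x, 0)))) :=
  suspension_flow_topologically_transitive_general f hf_trans τ
end

section
/- Let X and Y be compact metric spaces and let f : X → X and π : X → Y be continuous maps satisfying π ∘ f = π. Then h_top(f) = sup_{y ∈ Y} h_top(f restricted to π^{−1}(y)). -/
/-!
`h_top(f) ≥ h_top(f|_{π⁻¹(y)})` is monotonicity of entropy in the subset. Conversely, fix an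
entourage `U` and `c` above every fibre entropy. A fibre `π⁻¹(y)` has a finite cover by open
`(V, n)`-dynamical balls with `log (card) / n < c`; since `π` is a closed map, the same balls cover
`π⁻¹(W)` for a neighbourhood `W` of `y`. That set is `f`-invariant, so iterating the cover bounds
its `V ○ V`-entropy, hence its `U`-entropy, by `c`. Finitely many such `W` cover the compact `Y`,
and the entropy at a fixed entourage of a finite union is the maximum over the pieces.
-/

open Dynamics Set Filter Topology Uniformity ENNReal SetRel

namespace Dynamics

variable {X : Type*}

lemma coverEntropyEntourage_biUnion_finset {ι : Type*} (T : X → X) (F : ι → Set X)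
    (U : SetRel X X) (s : Finset ι) :
    coverEntropyEntourage T (⋃ i ∈ s, F i) U = ⨆ i ∈ s, coverEntropyEntourage T (F i) U := by
  classical
  induction s using Finset.induction_on with
  | empty => simp [coverEntropyEntourage_empty]
  | insert _ _ _ ih =>
    rw [Finset.set_biUnion_insert, coverEntropyEntourage_union, ih, Finset.iSup_insert]

lemma exists_isDynCoverOf_log_card_div_lt {T : X → X} {F : Set X} {U : SetRel X X} {c : EReal}
    (hc : coverEntropyInfEntourage T F U < c) :
    ∃ n ≠ 0, ∃ s : Finset X, IsDynCoverOf T F U n s ∧ log s.card / n < c := by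
  obtain ⟨n, hn_lt, hn⟩ :=
    ((frequently_lt_of_liminf_lt (by isBoundedDefault) hc).and_eventually
      (eventually_ne_atTop 0)).exists
  have hfin : coverMincard T F U n ≠ ⊤ := by
    intro h
    have hn_pos : (0 : EReal) < n := by exact_mod_cast Nat.pos_of_ne_zero hn
    simp only [h, ENat.toENNReal_top, log_top,
      EReal.top_div_of_pos_ne_top hn_pos (EReal.natCast_ne_top n)] at hn_lt
    exact not_top_lt hn_lt
  obtain ⟨s, s_cover, s_card⟩ := (coverMincard_finite_iff T F U n).1 hfin.lt_top
  refine ⟨n, hn, s, s_cover, ?_⟩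
  rwa [← ENat.toENNReal_coe, s_card]

variable [UniformSpace X]

lemma exists_mem_nhdsSet_forall_coverEntropyEntourage_lt {T : X → X} (hT : Continuous T)
    {K : Set X} {U : SetRel X X} (hU : U ∈ 𝓤 X) {c : EReal} (hc : coverEntropyInf T K < c) :
    ∃ A ∈ 𝓝ˢ K, ∀ G ⊆ A, MapsTo T G G → coverEntropyEntourage T G U < c := by
  obtain ⟨V, V_uni, V_symm, V_U⟩ := comp_symm_mem_uniformity_sets hU
  obtain ⟨V₀, ⟨V₀_uni, V₀_open⟩, V₀_V⟩ := uniformity_hasBasis_open.mem_iff.1 V_uni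
  obtain ⟨n, hn, s, s_cover, s_log⟩ := exists_isDynCoverOf_log_card_div_lt
    ((coverEntropyInfEntourage_le_coverEntropyInf T K V₀_uni).trans_lt hc)
  refine ⟨⋃ x ∈ s, {z | (z, x) ∈ dynEntourage T V₀ n}, ?_, fun G hG hGT ↦ ?_⟩
  · refine (isOpen_biUnion fun x _ ↦ ?_).mem_nhdsSet.2 fun z hz ↦ ?_
    · exact (isOpen.dynEntourage hT V₀_open n).preimage (continuous_id.prodMk continuous_const)
    · obtain ⟨x, hx, hzx⟩ := s_cover hz
      exact mem_iUnion₂.2 ⟨x, hx, hzx⟩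
  · have G_cover : IsDynCoverOf T G V n s := fun z hz ↦ by
      obtain ⟨x, hx, hzx⟩ := mem_iUnion₂.1 (hG hz)
      exact ⟨x, hx, dynEntourage_monotone T n V₀_V hzx⟩
    calc coverEntropyEntourage T G U
        ≤ coverEntropyEntourage T G (V ○ V) := coverEntropyEntourage_antitone T G V_U
      _ ≤ log s.card / n := G_cover.coverEntropyEntourage_le_log_card_div hGT hn
      _ < c := s_log

end Dynamics

/-- Let `X` and `Y` be compact metric spaces and `f : X → X`, `π : X → Y` continuous
maps with `π ∘ f = π`. Then `h_top(f) = sup_{y ∈ Y} h_top(f|_{π⁻¹(y)})`. -/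
theorem entropy_eq_iSup_entropy_on_fibers {X Y : Type*}
    [MetricSpace X] [CompactSpace X] [MetricSpace Y] [CompactSpace Y]
    (f : X → X) (hf : Continuous f)
    (π : X → Y) (hπ : Continuous π) (hcomm : π ∘ f = π) :
    coverEntropy f Set.univ = ⨆ y : Y, coverEntropy f (π ⁻¹' {y}) := by
  refine le_antisymm ?_ (iSup_le fun y ↦ coverEntropy_monotone f (subset_univ _))
  refine iSup₂_le fun U hU ↦ le_of_forall_gt_imp_ge_of_dense fun c hc ↦ ?_
  have hfiber : ∀ y, ∃ W ∈ 𝓝 y, coverEntropyEntourage f (π ⁻¹' W) U < c := fun y ↦ by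
    obtain ⟨A, hA, hAc⟩ := exists_mem_nhdsSet_forall_coverEntropyEntourage_lt hf hU
      ((coverEntropyInf_le_coverEntropy f _).trans_lt ((le_iSup _ y).trans_lt hc))
    obtain ⟨W, hW, hWA⟩ := hπ.isClosedMap.comap_nhds_le hA
    exact ⟨W, hW, hAc _ hWA (Function.Semiconj.mapsTo_preimage (fun x ↦ congrFun hcomm x)
      (mapsTo_id W))⟩
  choose W hW hWc using hfiber
  obtain ⟨t, ht⟩ := finite_cover_nhds hW
  calc coverEntropyEntourage f univ U
      = coverEntropyEntourage f (⋃ y ∈ t, π ⁻¹' W y) U := by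
        rw [← preimage_iUnion₂, ht, preimage_univ]
    _ = ⨆ y ∈ t, coverEntropyEntourage f (π ⁻¹' W y) U :=
        coverEntropyEntourage_biUnion_finset f _ U t
    _ ≤ c := iSup₂_le fun y _ ↦ (hWc y).le
end

section
/- Let X be a compact metric space, f : X → X a continuous map, and G a compact metrizable topological group acting continuously and freely on X such that f is G-equivariant. Let π : X → Y = X/G be the orbit map onto the orbit space with its quotient topology (a compact metrizable space), and let g : Y → Y be the induced continuous map satisfying g ∘ π = π ∘ f. Then h_top(f) = h_top(g). -/
/-! The factor map `π` gives `h(g) ≤ h(f)`. Conversely, a compact group acts equicontinuously, so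
finitely many elements `S ⊆ G` approximate every translation uniformly to within `ε / 4`. For each
block length `m`, points whose images are `δ`-close become `ε / 4`-close for `m` steps after
translating one of them. Cutting `[0, n)` into `n / m + 1` blocks of length `m` and choosing a
translation in `S` on each block, an `(n, δ)`-cover of `Y` yields an `(n, ε)`-cover of `X` only
`|S| ^ (n / m + 1)` times larger, so `h_ε(f) ≤ h(g) + log |S| / m` for every `m`. -/

open Dynamics Set Filter Topology ENNReal ExpGrowth
open scoped NNReal

lemma ExpGrowth.expGrowthSup_le_add_of_le_mul_pow {u v : ℕ → ℝ≥0∞} {K : ℝ≥0} (hK : 1 ≤ K)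
    {m : ℕ} (h : ∀ n, u n ≤ v n * (K : ℝ≥0∞) ^ (n / m + 1)) :
    expGrowthSup u ≤ expGrowthSup v + ((Real.log K / m : ℝ) : EReal) := by
  set c : ℝ≥0∞ := (K : ℝ≥0∞) ^ (m : ℝ)⁻¹
  have hpow (n : ℕ) : (K : ℝ≥0∞) ^ (n / m) ≤ c ^ n := by
    rw [← ENNReal.rpow_natCast, ← ENNReal.rpow_natCast c, ← ENNReal.rpow_mul, inv_mul_eq_div]
    exact ENNReal.rpow_le_rpow_of_exponent_le (mod_cast hK) Nat.cast_div_le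
  have hc : expGrowthSup (fun n ↦ c ^ n) = ((Real.log K / m : ℝ) : EReal) := by
    rw [expGrowthSup_pow, ENNReal.log_rpow, ENNReal.log_of_nnreal (by positivity), ← EReal.coe_mul,
      inv_mul_eq_div]
  have hle (n : ℕ) : u n ≤ K * (v * fun n ↦ c ^ n : ℕ → ℝ≥0∞) n :=
    calc u n ≤ v n * (K : ℝ≥0∞) ^ (n / m + 1) := h n
      _ = K * (v n * (K : ℝ≥0∞) ^ (n / m)) := by ring
      _ ≤ K * (v n * c ^ n) := by gcongr _ * (_ * ?_); exact hpow n
  calc expGrowthSup u ≤ expGrowthSup (v * fun n ↦ c ^ n) :=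
        expGrowthSup_le_of_eventually_le coe_ne_top (.of_forall hle)
    _ ≤ expGrowthSup v + expGrowthSup (fun n ↦ c ^ n) :=
        expGrowthSup_mul_le (.inr (hc ▸ EReal.coe_ne_top _)) (.inr (hc ▸ EReal.coe_ne_bot _))
    _ = _ := by rw [hc]

lemma EReal.le_of_forall_le_add_div_natCast {a b : EReal} (c : ℝ)
    (h : ∀ m : ℕ, 0 < m → a ≤ b + ((c / m : ℝ) : EReal)) : a ≤ b := by
  have hslack : Tendsto (fun m : ℕ ↦ ((c / m : ℝ) : EReal)) atTop (𝓝 0) :=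
    (continuous_coe_real_ereal.tendsto 0).comp (_root_.tendsto_const_div_atTop_nhds_zero_nat c)
  have hlim : Tendsto (fun m : ℕ ↦ b + ((c / m : ℝ) : EReal)) atTop (𝓝 b) := by
    simpa [Function.comp_def] using (EReal.continuousAt_add (p := (b, 0)) (.inr zero_ne_bot)
      (.inr zero_ne_top)).tendsto.comp (tendsto_const_nhds.prodMk_nhds hslack)
  exact ge_of_tendsto hlim (eventually_atTop.2 ⟨1, h⟩)

section

variable {X G : Type*} [MetricSpace X] [CompactSpace X]

lemma exists_finset_forall_exists_dist_smul_lt [TopologicalSpace G] [CompactSpace G] [SMul G X]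
    [ContinuousSMul G X] {ε : ℝ} (hε : 0 < ε) :
    ∃ S : Finset G, ∀ γ : G, ∃ s ∈ S, ∀ z : X, dist (γ • z) (s • z) < ε := by
  let Φ : C(G, C(X, X)) := ContinuousMap.curry ⟨fun p : G × X ↦ p.1 • p.2, continuous_smul⟩
  obtain ⟨S, -, hS⟩ := isCompact_univ.elim_nhds_subcover (fun s ↦ Φ ⁻¹' Metric.ball (Φ s) ε)
    fun s _ ↦ Φ.continuous.continuousAt.preimage_mem_nhds (Metric.ball_mem_nhds _ hε)
  refine ⟨S, fun γ ↦ ?_⟩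
  obtain ⟨s, hs, hγs⟩ := mem_iUnion₂.1 (hS (mem_univ γ))
  exact ⟨s, hs, fun z ↦ (ContinuousMap.dist_apply_le_dist z).trans_lt hγs⟩

lemma exists_pos_forall_dist_lt_exists_dist_smul_lt {Y : Type*} [MetricSpace Y] [Group G]
    [MulAction G X] [ContinuousConstSMul G X] {π : X → Y} (hπ : Continuous π)
    (hπ_orbits : ∀ x x' : X, π x = π x' → x' ∈ MulAction.orbit G x) {ε : ℝ} (hε : 0 < ε) :
    ∃ δ > 0, ∀ u v : X, dist (π u) (π v) < δ → ∃ γ : G, dist u (γ • v) < ε := by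
  set C : Set (X × X) := {p | ∀ γ : G, ε ≤ dist p.1 (γ • p.2)}
  have hC : IsClosed C := by
    simp only [C, ofPred_forall]
    exact isClosed_iInter fun γ ↦
      isClosed_le continuous_const (continuous_fst.dist (continuous_snd.const_smul γ))
  have hpos : ∀ p ∈ C, 0 < dist (π p.1) (π p.2) := by
    refine fun p hp ↦ dist_pos.2 fun hp' ↦ ?_
    obtain ⟨γ, hγ⟩ := hπ_orbits _ _ hp'
    have hfar := hp γ⁻¹
    rw [← hγ, inv_smul_smul, dist_self] at hfar
    exact hfar.not_gt hε
  obtain ⟨δ, hδ, hδC⟩ := hC.isCompact.exists_forall_le'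
    ((hπ.comp continuous_fst).dist (hπ.comp continuous_snd)).continuousOn hpos
  refine ⟨δ, hδ, fun u v huv ↦ ?_⟩
  by_contra! hfar
  exact (hδC (u, v) hfar).not_gt huv

end

namespace Dynamics

variable {X Y G : Type*}

lemma coverMincard_le_card_of_subset_biUnion {ι : Type*} {T : X → X} {F : Set X}
    {U : SetRel X X} {n : ℕ} {A : Finset ι} {D : ι → Set X} (hF : F ⊆ ⋃ i ∈ A, D i)
    (hD : ∀ i ∈ A, ∀ x ∈ D i, ∀ x' ∈ D i, (x, x') ∈ dynEntourage T U n) :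
    coverMincard T F U n ≤ A.card := by
  classical
  rcases isEmpty_or_nonempty X with hX | hX
  · rw [F.eq_empty_of_isEmpty, coverMincard_empty]
    exact zero_le
  have hcover : IsDynCoverOf T F U n (A.image fun i ↦ Classical.epsilon (· ∈ D i)) := by
    intro x hx
    obtain ⟨i, hi, hxi⟩ := mem_iUnion₂.1 (hF hx)
    exact ⟨_, Finset.mem_coe.2 (Finset.mem_image_of_mem _ hi),
      hD i hi x hxi _ (Classical.epsilon_spec ⟨x, hxi⟩)⟩
  exact hcover.coverMincard_le_card.trans (mod_cast Finset.card_image_le)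

variable [MetricSpace X] [MetricSpace Y]

lemma exists_pos_forall_dist_lt_exists_forall_dist_iterate_smul_lt [CompactSpace X] [Group G]
    [MulAction G X] [ContinuousConstSMul G X] {f : X → X} (hf : Continuous f)
    (h_equiv : ∀ (γ : G) (x : X), f (γ • x) = γ • f x) {π : X → Y} (hπ : Continuous π)
    (hπ_orbits : ∀ x x' : X, π x = π x' → x' ∈ MulAction.orbit G x) {ε : ℝ} (hε : 0 < ε)
    (m : ℕ) :
    ∃ δ > 0, ∀ u v : X, dist (π u) (π v) < δ →
      ∃ γ : G, ∀ k < m, dist (f^[k] u) (γ • f^[k] v) < ε := by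
  obtain ⟨ε', hε', hdyn⟩ := Metric.mem_uniformity_dist.1 <|
    dynEntourage_mem_uniformity (CompactSpace.uniformContinuous_of_continuous hf)
      (Metric.dist_mem_uniformity hε) m
  obtain ⟨δ, hδ, horbit⟩ := exists_pos_forall_dist_lt_exists_dist_smul_lt hπ hπ_orbits hε'
  refine ⟨δ, hδ, fun u v huv ↦ ?_⟩
  obtain ⟨γ, hγ⟩ := horbit u v huv
  refine ⟨γ, fun k hk ↦ ?_⟩
  have hcomm : Function.Commute f (γ • ·) := h_equiv γ
  rw [← (hcomm.iterate_left k).eq v]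
  exact mem_dynEntourage.1 (hdyn hγ) k hk

lemma coverMincard_le_coverMincard_mul_card_pow [SMul G X] {f : X → X} {g : Y → Y} {π : X → Y}
    (hπ : Function.Surjective π) (hsemi : Function.Semiconj π f g) {S : Finset G}
    (hS : S.Nonempty) {m : ℕ} (hm : 0 < m) {δ ε : ℝ}
    (hchunk : ∀ u v : X, dist (π u) (π v) < δ →
      ∃ s ∈ S, ∀ k < m, dist (f^[k] u) (s • f^[k] v) < ε / 2) (n : ℕ) :
    coverMincard f univ {p | dist p.1 p.2 < ε} n ≤
      coverMincard g univ {p | dist p.1 p.2 < δ} n * S.card ^ (n / m + 1) := by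
  classical
  rcases eq_top_or_lt_top (coverMincard g univ {p | dist p.1 p.2 < δ} n) with htop | hlt
  · rw [htop, ENat.top_mul (pow_ne_zero _ (mod_cast hS.card_pos.ne'))]
    exact le_top
  obtain ⟨E, hE, hEcard⟩ := (coverMincard_finite_iff g univ _ n).1 hlt
  set J := n / m + 1
  let lift := Function.surjInv hπ
  let D : Y × (Fin J → G) → Set X := fun p ↦ {x | ∀ j : Fin J, ∀ k < m, k + m * j < n →
    dist (f^[k + m * j] x) (p.2 j • f^[k + m * j] (lift p.1)) < ε / 2}
  have hcover : (univ : Set X) ⊆ ⋃ p ∈ E ×ˢ Fintype.piFinset (fun _ : Fin J ↦ S), D p := by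
    intro x _
    obtain ⟨y, hyE, hxy⟩ := hE (mem_univ (π x))
    have hcode (j : Fin J) : ∃ s ∈ S, ∀ k < m, k + m * j < n →
        dist (f^[k + m * j] x) (s • f^[k + m * j] (lift y)) < ε / 2 := by
      by_cases hj : m * j < n
      · have hclose : dist (π (f^[m * j] x)) (π (f^[m * j] (lift y))) < δ := by
          rw [(hsemi.iterate_right _).eq, (hsemi.iterate_right _).eq, Function.surjInv_eq hπ]
          exact mem_dynEntourage.1 hxy _ hj
        obtain ⟨s, hs, hs_close⟩ := hchunk _ _ hclose
        exact ⟨s, hs, fun k hk _ ↦ by simpa only [Function.iterate_add_apply] using hs_close k hk⟩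
      · obtain ⟨s, hs⟩ := hS
        exact ⟨s, hs, fun k _ hk ↦ absurd hk (by omega)⟩
    choose σ hσS hσ using hcode
    exact mem_iUnion₂.2 ⟨(y, σ), Finset.mem_product.2 ⟨hyE, Fintype.mem_piFinset.2 hσS⟩, hσ⟩
  have hsmall : ∀ p ∈ E ×ˢ Fintype.piFinset (fun _ : Fin J ↦ S), ∀ x ∈ D p, ∀ x' ∈ D p,
      (x, x') ∈ dynEntourage f {p | dist p.1 p.2 < ε} n := by
    intro p _ x hx x' hx'
    refine mem_dynEntourage.2 fun t ht ↦ ?_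
    have hj : t / m < J := Nat.lt_succ_of_le (Nat.div_le_div_right ht.le)
    have ht' : t % m + m * (t / m) = t := Nat.mod_add_div t m
    have h := hx ⟨t / m, hj⟩ (t % m) (Nat.mod_lt t hm) (ht'.symm ▸ ht)
    have h' := hx' ⟨t / m, hj⟩ (t % m) (Nat.mod_lt t hm) (ht'.symm ▸ ht)
    simp only [ht'] at h h'
    calc dist (f^[t] x) (f^[t] x') ≤ _ + _ := dist_triangle_right _ _ _
      _ < ε / 2 + ε / 2 := add_lt_add h h'
      _ = ε := add_halves ε
  calc coverMincard f univ {p | dist p.1 p.2 < ε} n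
      ≤ (E ×ˢ Fintype.piFinset (fun _ : Fin J ↦ S)).card :=
        coverMincard_le_card_of_subset_biUnion hcover hsmall
    _ = coverMincard g univ {p | dist p.1 p.2 < δ} n * S.card ^ J := by
        simp [← hEcard, Finset.card_product, Fintype.card_piFinset]

lemma coverEntropyEntourage_le_coverEntropy_of_orbit_quotient [CompactSpace X] [Group G]
    [TopologicalSpace G] [CompactSpace G] [MulAction G X] [ContinuousSMul G X] {f : X → X}
    (hf : Continuous f) (h_equiv : ∀ (γ : G) (x : X), f (γ • x) = γ • f x) {π : X → Y}
    (hπc : Continuous π) (hπs : Function.Surjective π)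
    (hπ_orbits : ∀ x x' : X, π x = π x' → x' ∈ MulAction.orbit G x) {g : Y → Y}
    (hsemi : Function.Semiconj π f g) {ε : ℝ} (hε : 0 < ε) :
    coverEntropyEntourage f univ {p | dist p.1 p.2 < ε} ≤ coverEntropy g univ := by
  obtain ⟨S, hS⟩ :=
    exists_finset_forall_exists_dist_smul_lt (G := G) (X := X) (by positivity : 0 < ε / 4)
  have hS₀ : S.Nonempty := let ⟨s, hs, _⟩ := hS 1; ⟨s, hs⟩
  refine EReal.le_of_forall_le_add_div_natCast (Real.log S.card) fun m hm ↦ ?_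
  obtain ⟨δ, hδ, hshadow⟩ := exists_pos_forall_dist_lt_exists_forall_dist_iterate_smul_lt hf
    h_equiv hπc hπ_orbits (by positivity : 0 < ε / 4) m
  have hchunk (u v : X) (huv : dist (π u) (π v) < δ) :
      ∃ s ∈ S, ∀ k < m, dist (f^[k] u) (s • f^[k] v) < ε / 2 := by
    obtain ⟨γ, hγ⟩ := hshadow u v huv
    obtain ⟨s, hs, hγs⟩ := hS γ
    refine ⟨s, hs, fun k hk ↦ ?_⟩
    calc dist (f^[k] u) (s • f^[k] v)
        ≤ dist (f^[k] u) (γ • f^[k] v) + dist (γ • f^[k] v) (s • f^[k] v) := dist_triangle _ _ _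
      _ < ε / 4 + ε / 4 := add_lt_add (hγ k hk) (hγs _)
      _ = ε / 2 := by ring
  have hcount (n : ℕ) := coverMincard_le_coverMincard_mul_card_pow hπs hsemi hS₀ hm hchunk n
  calc coverEntropyEntourage f univ {p | dist p.1 p.2 < ε}
      ≤ coverEntropyEntourage g univ {p | dist p.1 p.2 < δ}
          + ((Real.log S.card / m : ℝ) : EReal) :=
        expGrowthSup_le_add_of_le_mul_pow (K := S.card) (mod_cast hS₀.card_pos)
          fun n ↦ by simpa using ENat.toENNReal_le.2 (hcount n)
    _ ≤ coverEntropy g univ + ((Real.log S.card / m : ℝ) : EReal) := by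
        gcongr
        exact coverEntropyEntourage_le_coverEntropy g univ (Metric.dist_mem_uniformity hδ)

end Dynamics

theorem entropy_eq_entropy_of_free_quotient_general {X : Type*} [MetricSpace X] [CompactSpace X]
    (f : X → X) (hf : Continuous f)
    (G : Type*) [Group G] [TopologicalSpace G] [CompactSpace G]
    [MulAction G X] [ContinuousSMul G X]
    (h_equiv : ∀ (γ : G) (x : X), f (γ • x) = γ • f x)
    {Y : Type*} [MetricSpace Y]
    (π : X → Y) (hπ_quot : Topology.IsQuotientMap π)
    (hπ_orbits : ∀ x x' : X, π x = π x' ↔ x' ∈ MulAction.orbit G x)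
    (g : Y → Y) (hcomm : g ∘ π = π ∘ f) :
    coverEntropy f Set.univ = coverEntropy g Set.univ := by
  have hsemi : Function.Semiconj π f g := fun x ↦ (congrFun hcomm x).symm
  apply le_antisymm
  · rw [coverEntropy_eq_iSup_basis Metric.uniformity_basis_dist f univ]
    exact iSup₂_le fun ε hε ↦ coverEntropyEntourage_le_coverEntropy_of_orbit_quotient hf h_equiv
      hπ_quot.continuous hπ_quot.surjective (fun x x' ↦ (hπ_orbits x x').1) hsemi hε
  · simpa [hπ_quot.surjective.range_eq] using coverEntropy_image_le_of_uniformContinuous hsemi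
      (CompactSpace.uniformContinuous_of_continuous hπ_quot.continuous) univ

/-- Let `X` be a compact metric space, `f : X → X` continuous, and `G` a compact
metrizable topological group acting continuously and freely on `X`, with `f`
`G`-equivariant. Let `π : X → Y = X/G` be the orbit map onto the orbit space with its
quotient topology (a compact metrizable space, here given a compatible metric), and let
`g : Y → Y` be the induced continuous map, `g ∘ π = π ∘ f`. Then `h_top(f) = h_top(g)`. -/
theorem entropy_eq_entropy_of_free_quotient {X : Type*} [MetricSpace X] [CompactSpace X]
    (f : X → X) (hf : Continuous f)
    (G : Type*) [Group G] [TopologicalSpace G] [CompactSpace G]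
    [TopologicalSpace.MetrizableSpace G] [IsTopologicalGroup G]
    [MulAction G X] [ContinuousSMul G X]
    (h_free : ∀ (γ : G) (x : X), γ • x = x → γ = 1)
    (h_equiv : ∀ (γ : G) (x : X), f (γ • x) = γ • f x)
    {Y : Type*} [MetricSpace Y] [CompactSpace Y]
    (π : X → Y) (hπ_quot : Topology.IsQuotientMap π)
    (hπ_orbits : ∀ x x' : X, π x = π x' ↔ x' ∈ MulAction.orbit G x)
    (g : Y → Y) (hg : Continuous g) (hcomm : g ∘ π = π ∘ f) :
    coverEntropy f Set.univ = coverEntropy g Set.univ :=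
  entropy_eq_entropy_of_free_quotient_general f hf G h_equiv π hπ_quot hπ_orbits g hcomm
end
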